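/- arXiv:2010.03840 — 2 statements merged into one kernel-verified Lean document; each statement's English description precedes it below -/
import Mathlib

section
/- Let T ⊆ ℕ^{<ℕ} be a tree with at least one infinite path, and for σ ∈ T let T_σ = {τ ∈ T : τ ⊑ σ or σ ⊑ τ}. Define a quasi-order on Q = {σ ∈ T : T_σ has an infinite path} by σ ⪯ τ iff (there exists ρ ∈ Q with ρ <_lex σ) or τ ⊑ σ, where ρ <_lex σ means ρ precedes σ in the lexicographic-by-first-difference ordering on incomparable strings. Then ⪯ is a quasi-order, it is total on equivalence classes, and every infinite ⪯-bad sequence (σ_i) consists of prefixes of the leftmost path of T of strictly increasing length (for i ≥ 1). -/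
/-! The relation is transitive because extending σ preserves `ρ <_lex σ`, and total because two
strings are either prefix-comparable or lexicographically separated. If σ is extendible, say
along a path z, and no extendible string lies lexicographically left of σ, then σ is a prefix of
the leftmost path x: otherwise x leaves z at some i < |σ| with x i < z i, and x ↾ (i + 1), itself
extendible, lies left of σ. In a bad sequence no σ_i has an extendible string to its left, since
otherwise σ_i ⪯ σ_(i+1); so every σ_i is a prefix of x, and σ_i ⋠ σ_j forces |σ_i| < |σ_j|. -/

/-- A tree on ℕ: a set of finite sequences closed under prefixes. -/
def IsTree (T : Set (List ℕ)) : Prop := ∀ σ ∈ T, ∀ τ : List ℕ, τ <+: σ → τ ∈ T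

/-- σ is lexicographically less than τ at the first place where they differ. -/
def LexLt (σ τ : List ℕ) : Prop :=
  ∃ i : ℕ, (∀ j < i, σ[j]? = τ[j]?) ∧ ∃ a b : ℕ, σ[i]? = some a ∧ τ[i]? = some b ∧ a < b

/-- x is an infinite path through T. -/
def IsPath (T : Set (List ℕ)) (x : ℕ → ℕ) : Prop := ∀ k : ℕ, (List.range k).map x ∈ T

/-- T_σ : the elements of T comparable with σ under the prefix relation. -/
def Tsub (T : Set (List ℕ)) (σ : List ℕ) : Set (List ℕ) := {τ ∈ T | τ <+: σ ∨ σ <+: τ}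

/-- x is the leftmost path of T. -/
def IsLeftmostPath (T : Set (List ℕ)) (x : ℕ → ℕ) : Prop :=
  IsPath T x ∧ ∀ y : ℕ → ℕ, IsPath T y →
    x = y ∨ ∃ i : ℕ, x i < y i ∧ ∀ j < i, x j = y j

section MapRange

variable {α : Type*} (x : ℕ → α)

theorem getElem?_map_range_of_lt {k j : ℕ} (h : j < k) :
    ((List.range k).map x)[j]? = some (x j) := by
  simp [List.getElem?_range h]

theorem map_range_prefix_map_range {k m : ℕ} (h : k ≤ m) :
    (List.range k).map x <+: (List.range m).map x := by
  refine List.IsPrefix.map x ?_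
  rw [List.prefix_iff_eq_take, List.length_range, List.take_range, min_eq_left h]

end MapRange

theorem List.IsPrefix.getElem?_eq {α : Type*} {l₁ l₂ : List α} (h : l₁ <+: l₂) {j : ℕ}
    (hj : j < l₁.length) : l₂[j]? = l₁[j]? := by
  rw [List.prefix_iff_getElem?.mp h j hj, List.getElem?_eq_getElem hj]

theorem LexLt.trans_prefix {ρ τ σ : List ℕ} (h : LexLt ρ τ) (hτσ : τ <+: σ) : LexLt ρ σ := by
  obtain ⟨i, hagree, a, b, ha, hb, hab⟩ := h
  have hi : i < τ.length := (List.getElem?_eq_some_iff.mp hb).1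
  exact ⟨i, fun j hj => (hagree j hj).trans (hτσ.getElem?_eq (hj.trans hi)).symm,
    a, b, ha, (hτσ.getElem?_eq hi).trans hb, hab⟩

theorem prefix_of_getElem?_eq {σ τ : List ℕ} {i : ℕ} (hagree : ∀ j < i, σ[j]? = τ[j]?)
    (hσ : σ[i]? = none) : σ <+: τ := by
  have hlen : σ.length ≤ i := List.getElem?_eq_none_iff.mp hσ
  refine List.prefix_iff_getElem?.mpr fun j hj => ?_
  rw [← hagree j (hj.trans_le hlen), List.getElem?_eq_getElem hj]

theorem prefix_or_prefix_or_lexLt_or_lexLt (σ τ : List ℕ) :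
    σ <+: τ ∨ τ <+: σ ∨ LexLt σ τ ∨ LexLt τ σ := by
  by_cases hdiff : ∃ i : ℕ, σ[i]? ≠ τ[i]?
  swap
  · push Not at hdiff
    exact Or.inl (List.ext_getElem? hdiff ▸ List.prefix_refl σ)
  set i := Nat.find hdiff
  have hagree : ∀ j < i, σ[j]? = τ[j]? := fun j hj => not_not.mp (Nat.find_min hdiff hj)
  have hne : σ[i]? ≠ τ[i]? := Nat.find_spec hdiff
  rcases hσ : σ[i]? with _ | a
  · exact Or.inl (prefix_of_getElem?_eq hagree hσ)
  rcases hτ : τ[i]? with _ | b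
  · exact Or.inr (Or.inl (prefix_of_getElem?_eq (fun j hj => (hagree j hj).symm) hτ))
  rcases lt_or_gt_of_ne (fun hab : a = b => hne (by rw [hσ, hτ, hab])) with hab | hab
  · exact Or.inr (Or.inr (Or.inl ⟨i, hagree, a, b, hσ, hτ, hab⟩))
  · exact Or.inr (Or.inr (Or.inr ⟨i, fun j hj => (hagree j hj).symm, b, a, hτ, hσ, hab⟩))

theorem lexLt_map_range_of_lt {x z : ℕ → ℕ} {i k : ℕ} (hlt : x i < z i)
    (hagree : ∀ j < i, x j = z j) (hik : i < k) :
    LexLt ((List.range (i + 1)).map x) ((List.range k).map z) :=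
  ⟨i, fun j hj => by
      rw [getElem?_map_range_of_lt x (hj.trans i.lt_succ_self),
        getElem?_map_range_of_lt z (hj.trans hik), hagree j hj],
    x i, z i, getElem?_map_range_of_lt x i.lt_succ_self, getElem?_map_range_of_lt z hik, hlt⟩

section Paths

variable {T : Set (List ℕ)} {σ : List ℕ} {x z : ℕ → ℕ}

theorem IsPath.of_tsub (hz : IsPath (Tsub T σ) z) : IsPath T z := fun k => (hz k).1

theorem IsPath.tsub_map_range (hx : IsPath T x) (k : ℕ) :
    IsPath (Tsub T ((List.range k).map x)) x := fun m =>
  ⟨hx m, (le_total m k).imp (map_range_prefix_map_range x) (map_range_prefix_map_range x)⟩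

theorem eq_map_range_of_isPath_tsub (hz : IsPath (Tsub T σ) z) :
    σ = (List.range σ.length).map z := by
  have hlen : ((List.range σ.length).map z).length = σ.length := by simp
  rcases (hz σ.length).2 with h | h
  · exact (h.eq_of_length hlen).symm
  · exact h.eq_of_length hlen.symm

theorem IsLeftmostPath.eq_map_range (hx : IsLeftmostPath T x) (hz : IsPath (Tsub T σ) z)
    (hleft : ∀ k, ¬ LexLt ((List.range k).map x) σ) :
    σ = (List.range σ.length).map x := by
  have hσz := eq_map_range_of_isPath_tsub hz
  rcases hx.2 z hz.of_tsub with rfl | ⟨i, hlt, hagree⟩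
  · exact hσz
  have hi : σ.length ≤ i := not_lt.mp fun hi =>
    hleft (i + 1) (hσz ▸ lexLt_map_range_of_lt hlt hagree hi)
  refine hσz.trans (List.map_congr_left fun j hj => (hagree j ?_).symm)
  exact (List.mem_range.mp hj).trans_le hi

end Paths

theorem quasiorder_on_extendible_strings_general (T : Set (List ℕ))
    (x : ℕ → ℕ) (hx : IsLeftmostPath T x) :
    let Q : Set (List ℕ) := {σ ∈ T | ∃ z : ℕ → ℕ, IsPath (Tsub T σ) z}
    let pre : List ℕ → List ℕ → Prop := fun σ τ => (∃ ρ ∈ Q, LexLt ρ σ) ∨ τ <+: σ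
    (∀ σ : List ℕ, pre σ σ) ∧
    (∀ σ τ ρ : List ℕ, σ ∈ Q → τ ∈ Q → ρ ∈ Q → pre σ τ → pre τ ρ → pre σ ρ) ∧
    (∀ σ ∈ Q, ∀ τ ∈ Q, pre σ τ ∨ pre τ σ) ∧
    (∀ f : ℕ → List ℕ, (∀ n, f n ∈ Q) →
      (∀ i j, i < j → ¬ pre (f i) (f j)) →
      (∀ i, 1 ≤ i → f i = (List.range (f i).length).map x) ∧
      (∀ i j, 1 ≤ i → i < j → (f i).length < (f j).length)) := by
  intro Q pre
  refine ⟨fun σ => Or.inr (List.prefix_refl σ), ?_, ?_, ?_⟩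
  · rintro σ τ ρ - - - (⟨ρ', hρ', hlt⟩ | hτσ) hτρ
    · exact Or.inl ⟨ρ', hρ', hlt⟩
    · exact hτρ.imp (fun ⟨ρ', hρ', hlt⟩ => ⟨ρ', hρ', hlt.trans_prefix hτσ⟩) (·.trans hτσ)
  · intro σ hσ τ hτ
    rcases prefix_or_prefix_or_lexLt_or_lexLt σ τ with h | h | h | h
    exacts [Or.inr (Or.inr h), Or.inl (Or.inr h), Or.inr (Or.inl ⟨σ, hσ, h⟩),
      Or.inl (Or.inl ⟨τ, hτ, h⟩)]
  · intro f hfQ hbad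
    have hprefix : ∀ i, f i = (List.range (f i).length).map x := fun i =>
      hx.eq_map_range (hfQ i).2.choose_spec fun k hlt =>
        hbad i (i + 1) i.lt_succ_self (Or.inl ⟨_, ⟨hx.1 k, x, hx.1.tsub_map_range k⟩, hlt⟩)
    refine ⟨fun i _ => hprefix i, fun i j _ hij => not_le.mp fun hle => ?_⟩
    exact hbad i j hij (Or.inr (hprefix j ▸ hprefix i ▸ map_range_prefix_map_range x hle))

/-- The quasi-order on extendible strings used in the reduction
Π¹₁-CA ≤_W Σ¹₁-BS : it is a quasi-order, total, and every bad sequence consists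
(from index 1 on) of prefixes of the leftmost path of strictly increasing length. -/
theorem quasiorder_on_extendible_strings (T : Set (List ℕ)) (hT : IsTree T)
    (x : ℕ → ℕ) (hx : IsLeftmostPath T x) :
    let Q : Set (List ℕ) := {σ ∈ T | ∃ z : ℕ → ℕ, IsPath (Tsub T σ) z}
    let pre : List ℕ → List ℕ → Prop := fun σ τ => (∃ ρ ∈ Q, LexLt ρ σ) ∨ τ <+: σ
    (∀ σ : List ℕ, pre σ σ) ∧
    (∀ σ τ ρ : List ℕ, σ ∈ Q → τ ∈ Q → ρ ∈ Q → pre σ τ → pre τ ρ → pre σ ρ) ∧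
    (∀ σ ∈ Q, ∀ τ ∈ Q, pre σ τ ∨ pre τ σ) ∧
    (∀ f : ℕ → List ℕ, (∀ n, f n ∈ Q) →
      (∀ i j, i < j → ¬ pre (f i) (f j)) →
      (∀ i, 1 ≤ i → f i = (List.range (f i).length).map x) ∧
      (∀ i j, 1 ≤ i → i < j → (f i).length < (f j).length)) :=
  quasiorder_on_extendible_strings_general T x hx
end

section
/- Let g : ℕ → ℕ be a function and define a linear order on ℕ by processing stages: at stage s+1, if g(s) = g(s+1) place s+1 immediately above s when g(s)=0 and immediately below s when g(s)>0, and if g(s) ≠ g(s+1) place s+1 at the top. If g is eventually constant with nonzero value, the resulting order has order type n + ω* for some n ∈ ℕ (in particular it is ill-founded); if g is eventually constantly 0 or takes each value only finitely often while being unbounded, the resulting order has order type ω (in particular it is well-founded). -/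
/-!
Read `r` as a linear order. If `g` is eventually a nonzero constant, let `M` be the first stage
from which it is constant: `M` is placed on top of `0, …, M - 1`, and every later number goes
immediately below its predecessor, so `0, …, M - 1` form a finite initial segment above which
`M, M + 1, …` descend, giving type `M + ω*`.

In the other two cases every `x` is followed by a stage `s > x` placed on top of all earlier
numbers (if `g` is eventually `0`, every stage from the first constant one; if the fibres of `g`
are finite, every stage where `g` changes value). Since a new number is put on top or next to its
predecessor, once `x` lies below a later number it lies below every number after that one, so `x`
has fewer than `s` predecessors. An infinite linear order in which all elements have finitely many
predecessors has type `ω`.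
-/

/-- The order of type n + ω* : a finite order of size n followed above by a
reversed copy of ω. -/
def FinOmegaStarLe (n : ℕ) : (Fin n ⊕ ℕ) → (Fin n ⊕ ℕ) → Prop
  | Sum.inl i, Sum.inl j => i ≤ j
  | Sum.inl _, Sum.inr _ => True
  | Sum.inr _, Sum.inl _ => False
  | Sum.inr i, Sum.inr j => j ≤ i

open Function

section LinearOrderOfRel

variable {α : Type*} (r : α → α → Prop) [IsLinearOrder α r]

noncomputable abbrev linearOrderOfIsLinearOrder : LinearOrder α where
  le := r
  le_refl := refl_of r
  le_trans _ _ _ := trans_of r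
  le_antisymm _ _ := antisymm_of r
  le_total := total_of r
  toDecidableLE := Classical.decRel r

variable {r}

theorem exists_bijective_finOmegaStarLe (s : Finset α) (f : ℕ → α)
    (hf : ∀ n, r (f (n + 1)) (f n) ∧ f (n + 1) ≠ f n) (hs : ∀ x ∈ s, ∀ n, r x (f n))
    (hcompl : ∀ y, y ∈ s ↔ y ∉ Set.range f) :
    ∃ e : Fin s.card ⊕ ℕ → α, Bijective e ∧
      ∀ a b, FinOmegaStarLe s.card a b ↔ r (e a) (e b) := by
  let _ := linearOrderOfIsLinearOrder r
  have hf' : StrictAnti f := strictAnti_nat_of_succ_lt fun n => lt_of_le_of_ne (hf n).1 (hf n).2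
  have hlt : ∀ x ∈ s, ∀ n, x < f n := fun x hx n =>
    lt_of_le_of_ne (hs x hx n) fun hxn => (hcompl x).1 hx ⟨n, hxn.symm⟩
  set σ := s.orderIsoOfFin rfl
  refine ⟨Sum.elim (fun i => σ i) f, ⟨?_, ?_⟩, ?_⟩
  · exact Subtype.val_injective.comp σ.injective |>.sumElim hf'.injective
      fun i n => (hlt _ (σ i).2 n).ne
  · intro y
    by_cases hy : y ∈ s
    · exact ⟨Sum.inl (σ.symm ⟨y, hy⟩), by simp⟩
    · obtain ⟨n, rfl⟩ := not_not.1 (mt (hcompl y).2 hy)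
      exact ⟨Sum.inr n, rfl⟩
  · rintro (i | i) (j | j)
    · exact σ.le_iff_le.symm
    · exact iff_of_true trivial (hlt _ (σ i).2 j).le
    · exact iff_of_false id (hlt _ (σ j).2 i).not_ge
    · exact hf'.le_iff_ge.symm

theorem exists_bijective_nat_of_finite_predecessors [Infinite α] (h : ∀ x, {y | r y x}.Finite) :
    (∃ e : ℕ → α, Bijective e ∧ ∀ a b, a ≤ b ↔ r (e a) (e b)) ∧
      WellFounded fun a b => r a b ∧ a ≠ b := by
  let _ := linearOrderOfIsLinearOrder r
  let rank : α → ℕ := fun x => (Set.Iio x).ncard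
  have hrank : StrictMono rank := fun x y hxy =>
    Set.ncard_lt_ncard (Set.Iio_ssubset_Iio hxy) ((h y).subset fun _ (hz : _ < y) => hz.le)
  have : Infinite (Set.range rank) := (Set.infinite_range_of_injective hrank.injective).to_subtype
  let e : ℕ ≃o α := (Nat.Subtype.orderIsoOfNat _).trans hrank.orderIso.symm
  refine ⟨⟨e, e.bijective, fun a b => e.le_iff_le.symm⟩, ?_⟩
  have := e.symm.toOrderEmbedding.wellFoundedLT
  exact Subrelation.wf (fun hab => lt_of_le_of_ne hab.1 hab.2) wellFounded_lt

end LinearOrderOfRel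

structure IsStageOrder (g : ℕ → ℕ) (r : ℕ → ℕ → Prop) : Prop where
  above : ∀ s, g s = g (s + 1) → g s = 0 → r s (s + 1) ∧
    ∀ t ≤ s, r t s ∨ r (s + 1) t
  below : ∀ s, g s = g (s + 1) → g s ≠ 0 → r (s + 1) s ∧
    ∀ t ≤ s, r s t ∨ r t (s + 1)
  top : ∀ s, g s ≠ g (s + 1) → ∀ t ≤ s, r t (s + 1)

def IsStageTop (r : ℕ → ℕ → Prop) (s : ℕ) : Prop := ∀ t ≤ s, r t s

namespace IsStageOrder

variable {g : ℕ → ℕ} {r : ℕ → ℕ → Prop} {s x u v N : ℕ}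

theorem isStageTop_succ_of_ne [IsPartialOrder ℕ r] (h : IsStageOrder g r)
    (hs : g s ≠ g (s + 1)) : IsStageTop r (s + 1) := fun t ht =>
  (Nat.lt_or_eq_of_le ht).elim (fun hlt => h.top s hs t (Nat.le_of_lt_succ hlt))
    fun heq => heq ▸ refl_of r _

theorem isStageTop_succ_of_eq_zero [IsPartialOrder ℕ r] (h : IsStageOrder g r)
    (hs : g s = g (s + 1)) (h0 : g s = 0) (htop : IsStageTop r s) : IsStageTop r (s + 1) :=
  fun t ht => (Nat.lt_or_eq_of_le ht).elim
    (fun hlt => trans_of r (htop t (Nat.le_of_lt_succ hlt)) (h.above s hs h0).1)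
    fun heq => heq ▸ refl_of r _

/-- Take `M` minimal: either `M = 0` or `g` changes value just before `M`. -/
theorem exists_isStageTop_of_eventually_eq [IsPartialOrder ℕ r] (h : IsStageOrder g r)
    (hN : ∀ s, N ≤ s → g s = v) : ∃ M, IsStageTop r M ∧ ∀ s, M ≤ s → g s = v := by
  classical
  have hex : ∃ M, ∀ s, M ≤ s → g s = v := ⟨N, hN⟩
  obtain ⟨M, hM, hmin⟩ :
      ∃ M, (∀ s, M ≤ s → g s = v) ∧ ∀ k, M = k + 1 → g k ≠ g (k + 1) :=
    ⟨Nat.find hex, Nat.find_spec hex, fun k hk heq =>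
      Nat.find_min hex (by omega : k < Nat.find hex) fun s hs =>
        (Nat.lt_or_eq_of_le hs).elim (fun hlt => Nat.find_spec hex s (by omega))
          fun hks => hks ▸ heq.trans (Nat.find_spec hex (k + 1) hk.le)⟩
  refine ⟨M, ?_, hM⟩
  rcases M with _ | k
  · intro t ht
    rw [Nat.le_zero.1 ht]
    exact refl_of r 0
  · exact h.isStageTop_succ_of_ne (hmin k rfl)

theorem rel_of_lt_of_rel_of_le [IsPartialOrder ℕ r] (h : IsStageOrder g r) (hxu : x < u)
    (hr : r x u) (huv : u ≤ v) : r x v := by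
  induction v, huv using Nat.le_induction with
  | base => exact hr
  | succ v hv ih =>
    by_cases hg : g v = g (v + 1)
    · by_cases h0 : g v = 0
      · exact trans_of r ih (h.above v hg h0).1
      · exact ((h.below v hg h0).2 x (by omega)).resolve_left
          fun hvx => (by omega : x ≠ v) (antisymm_of r ih hvx)
    · exact h.top v hg x (by omega)

theorem succ_rel_of_eventually_eq (h : IsStageOrder g r) (hv : v ≠ 0)
    (hN : ∀ s, N ≤ s → g s = v) (hs : N ≤ s) : r (s + 1) s :=
  (h.below s (by rw [hN s hs, hN (s + 1) (by omega)]) (by rw [hN s hs]; exact hv)).1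

theorem exists_bijective_finOmegaStarLe_of_eventually_eq [IsLinearOrder ℕ r]
    (h : IsStageOrder g r) (hv : v ≠ 0) (hN : ∀ s, N ≤ s → g s = v) :
    ∃ (n : ℕ) (e : Fin n ⊕ ℕ → ℕ), Bijective e ∧
      ∀ a b, FinOmegaStarLe n a b ↔ r (e a) (e b) := by
  obtain ⟨M, htop, hM⟩ := h.exists_isStageTop_of_eventually_eq hN
  have hdesc (n : ℕ) : r (M + (n + 1)) (M + n) ∧ M + (n + 1) ≠ M + n :=
    ⟨h.succ_rel_of_eventually_eq hv hM (Nat.le_add_right M n), by omega⟩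
  have hbelow (x : ℕ) (hx : x ∈ Finset.range M) (n : ℕ) : r x (M + n) :=
    h.rel_of_lt_of_rel_of_le (Finset.mem_range.1 hx) (htop x (Finset.mem_range.1 hx).le)
      (Nat.le_add_right M n)
  have hcompl (y : ℕ) : y ∈ Finset.range M ↔ y ∉ Set.range (M + ·) := by
    simp only [Finset.mem_range, Set.mem_range, not_exists]
    exact ⟨fun hy n => by omega, fun hy => by by_contra! hMy; exact hy (y - M) (by omega)⟩
  exact ⟨_, exists_bijective_finOmegaStarLe _ _ hdesc hbelow hcompl⟩

theorem finite_predecessors [IsPartialOrder ℕ r] (h : IsStageOrder g r)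
    (htops : ∀ x, ∃ s, x < s ∧ IsStageTop r s) (x : ℕ) : {y | r y x}.Finite := by
  obtain ⟨s, hxs, htop⟩ := htops x
  refine (Set.finite_Iio s).subset fun y (hyx : r y x) => Set.mem_Iio.2 ?_
  by_contra! hsy
  have := antisymm_of r (h.rel_of_lt_of_rel_of_le hxs (htop x hxs.le) hsy) hyx
  omega

theorem exists_isStageTop_gt_of_eventually_zero [IsPartialOrder ℕ r] (h : IsStageOrder g r)
    (hN : ∀ s, N ≤ s → g s = 0) (x : ℕ) : ∃ s, x < s ∧ IsStageTop r s := by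
  obtain ⟨M, htop, hM⟩ := h.exists_isStageTop_of_eventually_eq hN
  refine ⟨x + M + 1, by omega, ?_⟩
  induction x + M + 1, (by omega : M ≤ x + M + 1) using Nat.le_induction with
  | base => exact htop
  | succ s hs ih =>
    exact h.isStageTop_succ_of_eq_zero (by rw [hM s hs, hM (s + 1) (by omega)]) (hM s hs) ih

theorem exists_isStageTop_gt_of_finite_fibres [IsPartialOrder ℕ r] (h : IsStageOrder g r)
    (hfin : ∀ v, {s | g s = v}.Finite) (x : ℕ) : ∃ s, x < s ∧ IsStageTop r s := by
  obtain ⟨s, hxs, hs⟩ : ∃ s, x ≤ s ∧ g s ≠ g (s + 1) := by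
    by_contra! hconst
    refine (Set.Ici_infinite x).mono (fun s (hs : x ≤ s) => ?_) (hfin (g x))
    induction s, hs using Nat.le_induction with
    | base => rfl
    | succ s hs ih => exact (hconst s hs).symm.trans ih
  exact ⟨s + 1, by omega, h.isStageTop_succ_of_ne hs⟩

end IsStageOrder

/-- The stage construction driven by g : if g(s) = g(s+1) place s+1 immediately
above s (when the common value is 0) or immediately below s (when it is nonzero),
and if g(s) ≠ g(s+1) place s+1 on top. If g is eventually constant with nonzero
value the order has type n + ω* (in particular ill-founded); if g is eventually 0
or takes each value finitely often while being unbounded, the order has type ω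
(in particular well-founded). -/
theorem stage_construction_order_type (g : ℕ → ℕ) (r : ℕ → ℕ → Prop)
    (hrefl : ∀ a, r a a) (htrans : ∀ a b c, r a b → r b c → r a c)
    (hantisymm : ∀ a b, r a b → r b a → a = b) (htotal : ∀ a b, r a b ∨ r b a)
    (hcase1 : ∀ s, g s = g (s+1) → g s = 0 →
      r s (s+1) ∧ ∀ t ≤ s, r t s ∨ r (s+1) t)
    (hcase2 : ∀ s, g s = g (s+1) → g s ≠ 0 →
      r (s+1) s ∧ ∀ t ≤ s, r s t ∨ r t (s+1))
    (hcase3 : ∀ s, g s ≠ g (s+1) → ∀ t ≤ s, r t (s+1)) :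
    ((∃ N v : ℕ, v ≠ 0 ∧ ∀ s, N ≤ s → g s = v) →
      (∃ (n : ℕ) (e : (Fin n ⊕ ℕ) → ℕ), Function.Bijective e ∧
        ∀ a b, FinOmegaStarLe n a b ↔ r (e a) (e b)) ∧
      (∃ f : ℕ → ℕ, ∀ m, r (f (m+1)) (f m) ∧ f (m+1) ≠ f m)) ∧
    (((∃ N : ℕ, ∀ s, N ≤ s → g s = 0) ∨
        ((∀ v : ℕ, {s : ℕ | g s = v}.Finite) ∧ ∀ b : ℕ, ∃ s, b < g s)) →
      (∃ e : ℕ → ℕ, Function.Bijective e ∧ ∀ a b : ℕ, a ≤ b ↔ r (e a) (e b)) ∧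
      WellFounded (fun a b : ℕ => r a b ∧ a ≠ b)) := by
  have : IsLinearOrder ℕ r :=
    { refl := hrefl, trans := htrans, antisymm := hantisymm, total := htotal }
  have h : IsStageOrder g r := ⟨hcase1, hcase2, hcase3⟩
  refine ⟨fun ⟨N, v, hv, hN⟩ =>
      ⟨h.exists_bijective_finOmegaStarLe_of_eventually_eq hv hN, ?_⟩,
    fun hg => exists_bijective_nat_of_finite_predecessors (h.finite_predecessors ?_)⟩
  · exact ⟨(N + ·), fun m =>
      ⟨h.succ_rel_of_eventually_eq hv hN (Nat.le_add_right N m), by simp⟩⟩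
  · rcases hg with ⟨N, hN⟩ | ⟨hfin, -⟩
    · exact h.exists_isStageTop_gt_of_eventually_zero hN
    · exact h.exists_isStageTop_gt_of_finite_fibres hfin
end
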